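/- Let P be a tree poset, t ≥ 2, and let F = (x_{i_1},…,x_{i_t}) and G = (x_{j_1},…,x_{j_t}) be two saturated chains of length t in P with nonempty intersection (as vertex sets). Then F ∩ G is the vertex set of a single saturated chain x_{k_1} < ⋯ < x_{k_s} with s ≤ t, and x_{i_1} ≤ x_{k_1} and x_{j_1} ≤ x_{k_1} in P. -/

import Mathlib

open MvPolynomial

noncomputable section
/-- A saturated chain in a poset, as a list of elements in which each element is
covered by the next. -/
def IsSatChain {P : Type*} [PartialOrder P] (l : List P) : Prop := l.Chain' (· ⋖ ·)

/-- A maximal saturated chain: a saturated chain starting at a minimal element and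
ending at a maximal element. -/
def IsMaxSatChain {P : Type*} [PartialOrder P] (l : List P) : Prop :=
  IsSatChain l ∧ (∃ a, l.head? = some a ∧ IsMin a) ∧ (∃ b, l.getLast? = some b ∧ IsMax b)

/-- The path ideal `I_t(P)`: generated by the products of the vertices of all
saturated chains with `t` elements. -/
def pathIdeal (k : Type) [Field k] (P : Type) [PartialOrder P] (t : ℕ) :
    Ideal (MvPolynomial P k) :=
  Ideal.span {f | ∃ l : List P, l.length = t ∧ IsSatChain l ∧ f = (l.map X).prod}
/-- The Hasse diagram of a poset, as an undirected simple graph. -/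
def hasse (P : Type*) [PartialOrder P] : SimpleGraph P := SimpleGraph.fromRel (· ⋖ ·)

/-- A poset contains a pencil: a disjoint union `X ∪ {z} ∪ Y` with `|X|,|Y| ≥ 2`,
`x < z < y` for all `x ∈ X`, `y ∈ Y`, and `X`, `Y` antichains. -/
def HasPencil (P : Type*) [PartialOrder P] : Prop :=
  ∃ (z : P) (Xs Ys : Set P), Xs.Nontrivial ∧ Ys.Nontrivial ∧
    (∀ x ∈ Xs, x < z) ∧ (∀ y ∈ Ys, z < y) ∧
    IsAntichain (· ≤ ·) Xs ∧ IsAntichain (· ≤ ·) Ys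

/-- A tree poset: the Hasse diagram is a tree as an undirected graph and there is
no pencil subposet. -/
def IsTreePoset (P : Type*) [PartialOrder P] : Prop := (hasse P).IsTree ∧ ¬ HasPencil P

/-- A forest poset: a disjoint union of tree posets, i.e. the Hasse diagram is acyclic
and there is no pencil subposet. -/
def IsForestPoset (P : Type*) [PartialOrder P] : Prop :=
  (hasse P).IsAcyclic ∧ ¬ HasPencil P

/-! A saturated chain traces a path in the Hasse diagram, so when the Hasse diagram is acyclic a
saturated chain is determined by its endpoints. Applied to the segments of `F` and `G` lying in
`[x, y]` for common elements `x ≤ y`, this shows that `F ∩ G` is convex in `F`, and filtering a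
saturated chain by a convex predicate leaves a saturated chain. -/

theorem CovBy.hasse_adj {P : Type*} [PartialOrder P] {a b : P} (h : a ⋖ b) :
    (hasse P).Adj a b :=
  (SimpleGraph.fromRel_adj _ _ _).mpr ⟨h.ne, .inl h⟩

namespace IsSatChain

variable {P : Type*} [PartialOrder P] {l : List P}

theorem pairwise_lt (hl : IsSatChain l) : l.Pairwise (· < ·) :=
  List.isChain_iff_pairwise.mp (hl.imp fun _ _ h => h.lt)

theorem head_le {a x : P} (hl : IsSatChain l) (ha : l.head? = some a) (hx : x ∈ l) : a ≤ x := by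
  obtain ⟨l', rfl⟩ := List.head?_eq_some_iff.mp ha
  rcases List.mem_cons.mp hx with rfl | hx
  · exact le_rfl
  · exact (List.pairwise_cons.mp hl.pairwise_lt).1 x hx |>.le

theorem le_getLast {b x : P} (hl : IsSatChain l) (hb : l.getLast? = some b) (hx : x ∈ l) :
    x ≤ b := by
  obtain ⟨l', rfl⟩ := List.getLast?_eq_some_iff.mp hb
  rcases List.mem_append.mp hx with hx | hx
  · exact (List.pairwise_append.mp hl.pairwise_lt).2.2 x hx b (List.mem_singleton_self b) |>.le
  · exact (List.mem_singleton.mp hx).le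

theorem head?_eq_some_of_forall_le {x : P} (hl : IsSatChain l) (hx : x ∈ l)
    (hmin : ∀ z ∈ l, x ≤ z) : l.head? = some x := by
  obtain ⟨a, ha⟩ := Option.ne_none_iff_exists'.mp
    (List.head?_eq_none_iff.not.mpr (List.ne_nil_of_mem hx))
  rw [ha, le_antisymm (hl.head_le ha hx) (hmin a (List.mem_of_mem_head? ha))]

theorem getLast?_eq_some_of_forall_le {y : P} (hl : IsSatChain l) (hy : y ∈ l)
    (hmax : ∀ z ∈ l, z ≤ y) : l.getLast? = some y := by
  obtain ⟨b, hb⟩ := Option.ne_none_iff_exists'.mp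
    (List.getLast?_eq_none_iff.not.mpr (List.ne_nil_of_mem hy))
  rw [hb, le_antisymm (hmax b (List.mem_of_mem_getLast? hb)) (hl.le_getLast hb hy)]

theorem filter (hl : IsSatChain l) (p : P → Bool)
    (hp : ∀ x ∈ l, ∀ y ∈ l, ∀ v ∈ l, p x → p y → x ≤ v → v ≤ y → p v) :
    IsSatChain (l.filter p) := by
  induction l with
  | nil => exact List.isChain_nil
  | cons a rest ih =>
    have htail : IsSatChain (rest.filter p) := ih hl.tail fun x hx y hy v hv =>
      hp x (List.mem_cons_of_mem _ hx) y (List.mem_cons_of_mem _ hy) v (List.mem_cons_of_mem _ hv)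
    rw [List.filter_cons]
    split
    case isFalse => exact htail
    case isTrue hpa =>
      refine List.isChain_cons.mpr ⟨fun b hb => ?_, htail⟩
      obtain ⟨hb_rest, hpb⟩ := List.mem_filter.mp (List.mem_of_mem_head? hb)
      cases rest with
      | nil => simp at hb_rest
      | cons c rest' =>
        have hac : a ⋖ c := (List.isChain_cons_cons.mp hl).1
        -- `c` lies between `a` and `b`, so it survives the filter and is its head
        have hpc : p c := hp a List.mem_cons_self b (List.mem_cons_of_mem _ hb_rest) c
          (List.mem_cons_of_mem _ List.mem_cons_self) hpa hpb hac.le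
          (IsSatChain.head_le hl.tail rfl hb_rest)
        simp only [List.filter_cons, hpc, if_true, List.head?_cons, Option.mem_some_iff] at hb
        exact hb ▸ hac

theorem exists_walk_support_eq (hl : IsSatChain l) {a b : P} (ha : l.head? = some a)
    (hb : l.getLast? = some b) : ∃ p : (hasse P).Walk a b, p.support = l := by
  induction l generalizing a with
  | nil => simp at ha
  | cons x rest ih =>
    obtain rfl : x = a := by simpa using ha
    cases rest with
    | nil =>
      obtain rfl : x = b := by simpa using hb
      exact ⟨.nil, rfl⟩
    | cons c rest' =>
      have hxc : x ⋖ c := (List.isChain_cons_cons.mp hl).1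
      obtain ⟨p, hp⟩ := ih hl.tail rfl (List.getLast?_cons_cons ▸ hb)
      exact ⟨.cons hxc.hasse_adj p, by simp [hp]⟩

theorem eq_of_isAcyclic (hP : (hasse P).IsAcyclic) {l₁ l₂ : List P} {a b : P}
    (h₁ : IsSatChain l₁) (h₂ : IsSatChain l₂) (ha₁ : l₁.head? = some a)
    (ha₂ : l₂.head? = some a) (hb₁ : l₁.getLast? = some b) (hb₂ : l₂.getLast? = some b) :
    l₁ = l₂ := by
  obtain ⟨p₁, hp₁⟩ := h₁.exists_walk_support_eq ha₁ hb₁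
  obtain ⟨p₂, hp₂⟩ := h₂.exists_walk_support_eq ha₂ hb₂
  have := hP.subsingleton_path a b
  have hp : p₁ = p₂ := congrArg Subtype.val <| Subsingleton.elim
    (⟨p₁, .mk' (hp₁ ▸ h₁.pairwise_lt.nodup)⟩ : (hasse P).Path a b)
    ⟨p₂, .mk' (hp₂ ▸ h₂.pairwise_lt.nodup)⟩
  rw [← hp₁, ← hp₂, hp]

theorem mem_of_mem_of_le_of_le (hP : (hasse P).IsAcyclic) {F G : List P} {x y v : P}
    (hF : IsSatChain F) (hG : IsSatChain G) (hxF : x ∈ F) (hxG : x ∈ G) (hyF : y ∈ F)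
    (hyG : y ∈ G) (hvF : v ∈ F) (hxv : x ≤ v) (hvy : v ≤ y) : v ∈ G := by
  classical
  let I : P → Bool := fun z => decide (x ≤ z ∧ z ≤ y)
  have hI : ∀ {l : List P}, IsSatChain l → IsSatChain (l.filter I) := fun hl =>
    hl.filter I fun _ _ _ _ _ _ h₁ h₂ h₃ h₄ => by
      simp only [I, decide_eq_true_eq] at h₁ h₂ ⊢
      exact ⟨h₁.1.trans h₃, h₄.trans h₂.2⟩
  have hxy : x ≤ y := hxv.trans hvy
  have hmem : ∀ {l : List P} {z : P}, z ∈ l → x ≤ z → z ≤ y → z ∈ l.filter I :=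
    fun hz h₁ h₂ => List.mem_filter.mpr ⟨hz, by simp [I, h₁, h₂]⟩
  have hbounds : ∀ {l : List P} {z : P}, z ∈ l.filter I → x ≤ z ∧ z ≤ y := fun hz => by
    simpa [I] using (List.mem_filter.mp hz).2
  have hFG : F.filter I = G.filter I :=
    eq_of_isAcyclic hP (hI hF) (hI hG)
      ((hI hF).head?_eq_some_of_forall_le (hmem hxF le_rfl hxy) fun _ hz => (hbounds hz).1)
      ((hI hG).head?_eq_some_of_forall_le (hmem hxG le_rfl hxy) fun _ hz => (hbounds hz).1)
      ((hI hF).getLast?_eq_some_of_forall_le (hmem hyF hxy le_rfl) fun _ hz => (hbounds hz).2)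
      ((hI hG).getLast?_eq_some_of_forall_le (hmem hyG hxy le_rfl) fun _ hz => (hbounds hz).2)
  exact (List.mem_filter.mp (hFG ▸ hmem hvF hxv hvy)).1

end IsSatChain

theorem treePoset_chain_intersection_general (P : Type) [PartialOrder P]
    (hP : IsTreePoset P) (t : ℕ) (F G : List P)
    (hFlen : F.length = t)
    (hF : IsSatChain F) (hG : IsSatChain G) (hcap : ∃ x, x ∈ F ∧ x ∈ G) :
    ∃ m : List P, m ≠ [] ∧ IsSatChain m ∧ m.length ≤ t ∧
      (∀ x, x ∈ m ↔ (x ∈ F ∧ x ∈ G)) ∧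
      (∀ a fa, m.head? = some a → F.head? = some fa → fa ≤ a) ∧
      (∀ a ga, m.head? = some a → G.head? = some ga → ga ≤ a) := by
  classical
  obtain ⟨x₀, hx₀F, hx₀G⟩ := hcap
  let m := F.filter (· ∈ G)
  have hmem : ∀ x, x ∈ m ↔ x ∈ F ∧ x ∈ G := by simp [m]
  have hm : IsSatChain m := hF.filter _ fun x hxF y hyF v hvF hxG hyG hxv hvy => by
    simp only [decide_eq_true_eq] at hxG hyG ⊢
    exact hF.mem_of_mem_of_le_of_le hP.1.isAcyclic hG hxF hxG hyF hyG hvF hxv hvy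
  refine ⟨m, List.ne_nil_of_mem ((hmem x₀).2 ⟨hx₀F, hx₀G⟩), hm,
    hFlen ▸ List.filter_sublist.length_le, hmem, ?_, ?_⟩
  · exact fun a _ ha hfa => hF.head_le hfa ((hmem a).1 (List.mem_of_mem_head? ha)).1
  · exact fun a _ ha hga => hG.head_le hga ((hmem a).1 (List.mem_of_mem_head? ha)).2

/-- In a tree poset, the intersection of two saturated chains of length `t` is again
a saturated chain, whose bottom element lies above the bottoms of both chains. -/
theorem treePoset_chain_intersection (P : Type) [PartialOrder P] [Fintype P]
    (hP : IsTreePoset P) (t : ℕ) (ht : 2 ≤ t) (F G : List P)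
    (hFlen : F.length = t) (hGlen : G.length = t)
    (hF : IsSatChain F) (hG : IsSatChain G) (hcap : ∃ x, x ∈ F ∧ x ∈ G) :
    ∃ m : List P, m ≠ [] ∧ IsSatChain m ∧ m.length ≤ t ∧
      (∀ x, x ∈ m ↔ (x ∈ F ∧ x ∈ G)) ∧
      (∀ a fa, m.head? = some a → F.head? = some fa → fa ≤ a) ∧
      (∀ a ga, m.head? = some a → G.head? = some ga → ga ≤ a) :=
  treePoset_chain_intersection_general P hP t F G hFlen hF hG hcap
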